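/- arXiv:0712.3019 — 2 statements merged into one kernel-verified Lean document; each statement's English description precedes it below -/
import Mathlib

section
/- Let 1/2 ≤ α < 1. For each integer m ≥ 2, set n_m = m!, k_m = ⌊n_m^{α/(1−α)}⌋, and let G_m = C_{k_m} × S_m be the direct product of the cyclic group of order k_m with the symmetric group on m letters. Then Θ(G_m) → α as m → ∞. In particular, for every α ∈ [1/2, 1) there exists a sequence of finite groups G_m with |G_m| → ∞ and lim_{m→∞} Θ(G_m) = α. -/
/-!
Write `G = C_k × S_m`, `N = m!` and `L = log (k N)`. Since `C_k` is central, `|C(a, σ)| / |G|`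
equals `|C(σ)| / N`, so the defining equation reads `exp (2θL) = k ∑_σ exp (θL |C(σ)| / N)`.
The identity contributes `exp (θL)`; every other centralizer in `S_m` has index at least `m - 1`
(as in any doubly transitive action), so each of the remaining `N - 1` terms is at most
`exp (θL / (m - 1))`. Hence `log k ≤ θL` and
`2θL ≤ log 2 + max (log k + θL) (L + θL / (m - 1))`, i.e.
`log k / L ≤ θ ≤ max (log k / L + o(1)) (1/2 + o(1))`. For `k = ⌊N^c⌋` with `c = α / (1 - α)`
we get `log k / L → c / (c + 1) = α ≥ 1/2`.
-/

/-- The defining equation for the group invariant `Θ(G)`: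
`2·Θ·log n = log (∑_{x ∈ G} exp (Θ · log n · |C(x)|/n))`, where `n = |G|` and
`C(x)` is the centralizer of `x` in `G`. -/
def ThetaEqn (G : Type*) [Group G] [Fintype G] (θ : ℝ) : Prop :=
  2 * θ * Real.log (Fintype.card G) =
    Real.log (∑ x : G, Real.exp (θ * Real.log (Fintype.card G) *
      ((Nat.card (Subgroup.centralizer ({x} : Set G)) : ℝ) / (Fintype.card G : ℝ))))

open Real Filter Topology Subgroup

theorem Subgroup.card_centralizer_singleton_prod {A P : Type*} [CommGroup A] [Group P]
    (a : A) (p : P) :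
    Nat.card (centralizer {(a, p)}) = Nat.card A * Nat.card (centralizer {p}) := by
  have h : centralizer {(a, p)} = (⊤ : Subgroup A).prod (centralizer {p}) := by
    ext ⟨x, y⟩
    simp [mem_centralizer_singleton_iff, mem_prod, Prod.ext_iff, mul_comm]
  rw [h, Nat.card_congr (prodEquiv _ _).toEquiv, Nat.card_prod, card_top]

open MulAction in
/-- `centralizer {g} ⊓ stabilizer G a` also fixes `g • a`, and by double transitivity the
pointwise stabilizer of `{a, g • a}` has index `n (n - 1)`. -/
theorem MulAction.card_sub_one_le_index_centralizer {G α : Type*} [Group G] [MulAction G α]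
    [Finite G] [Finite α] (h2 : IsMultiplyPretransitive G α 2) {g : G} {a : α}
    (hga : g • a ≠ a) :
    Nat.card α - 1 ≤ (centralizer {g}).index := by
  have hCS : centralizer {g} ⊓ stabilizer G a ≤ fixingSubgroup G {a, g • a} := by
    intro h hh
    rw [mem_inf, mem_centralizer_singleton_iff, mem_stabilizer_iff] at hh
    rw [mem_fixingSubgroup_iff]
    rintro x (rfl | rfl)
    · exact hh.2
    · rw [smul_smul, hh.1, mul_smul, hh.2]
  have hpair := Set.ncard_pair hga.symm
  have hF := h2.index_of_fixingSubgroup_mul hpair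
  have hS : (stabilizer G a).index ≤ Nat.card α := by
    rw [index_stabilizer]
    exact Set.ncard_le_card _
  have hFC : (fixingSubgroup G ({a, g • a} : Set α)).index ≤
      (centralizer {g}).index * Nat.card α :=
    (Nat.le_of_dvd (Nat.pos_of_ne_zero index_ne_zero_of_finite) (index_dvd_of_le hCS)).trans
      (index_inf_le.trans (Nat.mul_le_mul_left _ hS))
  obtain ⟨k, hk⟩ : ∃ k, Nat.card α = k + 2 :=
    ⟨Nat.card α - 2, by have := hpair ▸ Set.ncard_le_card ({a, g • a} : Set α); omega⟩
  rw [hk, Nat.add_sub_cancel, Nat.factorial_succ, Nat.factorial_succ, ← mul_assoc] at hF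
  rw [hk, Nat.eq_of_mul_eq_mul_right (Nat.factorial_pos k) hF, mul_comm (k + 1 + 1)] at hFC
  have := Nat.le_of_mul_le_mul_right hFC (Nat.succ_pos _)
  omega

theorem Equiv.Perm.card_centralizer_le {α : Type*} [Fintype α] [DecidableEq α]
    {σ : Equiv.Perm α} (hσ : σ ≠ 1) :
    (Nat.card (centralizer {σ}) : ℝ) ≤
      1 / ((Fintype.card α : ℝ) - 1) * Fintype.card (Equiv.Perm α) := by
  obtain ⟨a, ha⟩ : ∃ a, σ a ≠ a := by
    by_contra! h
    exact hσ (Equiv.ext h)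
  have hindex := MulAction.card_sub_one_le_index_centralizer
    (Equiv.Perm.isMultiplyPretransitive α 2) ha
  have hα : (1 : ℝ) < Fintype.card α := by
    exact_mod_cast Fintype.one_lt_card_iff.2 ⟨_, _, ha⟩
  have hcard : (Nat.card (centralizer {σ}) : ℝ) * (centralizer {σ}).index =
      Fintype.card (Perm α) := by
    exact_mod_cast (card_mul_index _).trans Nat.card_eq_fintype_card
  rw [Nat.card_eq_fintype_card, Nat.sub_le_iff_le_add] at hindex
  rw [one_div_mul_eq_div, le_div_iff₀ (by linarith), ← hcard]
  gcongr
  rw [sub_le_iff_le_add]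
  exact_mod_cast hindex

noncomputable def centralizerExpSum (G : Type*) [Group G] [Fintype G] (t : ℝ) : ℝ :=
  ∑ x : G, exp (t * ((Nat.card (centralizer ({x} : Set G)) : ℝ) / Fintype.card G))

section

variable {G : Type*} [Group G] [Fintype G]

variable (G) in
theorem exp_centralizer_one_div (t : ℝ) :
    exp (t * ((Nat.card (centralizer ({1} : Set G)) : ℝ) / Fintype.card G)) = exp t := by
  rw [centralizer_eq_top_iff_subset.2 (by simp [one_mem]), card_top, Nat.card_eq_fintype_card,
    div_self (by positivity), mul_one]

variable (G) in
theorem exp_le_centralizerExpSum (t : ℝ) : exp t ≤ centralizerExpSum G t := by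
  classical
  rw [centralizerExpSum, ← Finset.add_sum_erase _ _ (Finset.mem_univ 1),
    exp_centralizer_one_div G]
  exact le_add_of_nonneg_right (Finset.sum_nonneg fun _ _ => (exp_pos _).le)

theorem centralizerExpSum_le {t δ : ℝ} (ht : 0 ≤ t)
    (hG : ∀ x : G, x ≠ 1 → (Nat.card (centralizer {x}) : ℝ) ≤ δ * Fintype.card G) :
    centralizerExpSum G t ≤ exp t + Fintype.card G * exp (t * δ) := by
  classical
  rw [centralizerExpSum, ← Finset.add_sum_erase _ _ (Finset.mem_univ 1),
    exp_centralizer_one_div G]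
  gcongr
  calc _ ≤ ∑ _x ∈ Finset.univ.erase (1 : G), exp (t * δ) := by
        refine Finset.sum_le_sum fun x hx => ?_
        gcongr
        rw [div_le_iff₀ (by positivity)]
        exact hG x (Finset.ne_of_mem_erase hx)
    _ ≤ ∑ _x : G, exp (t * δ) :=
        Finset.sum_le_sum_of_subset_of_nonneg (Finset.erase_subset _ _)
          fun _ _ _ => (exp_pos _).le
    _ = _ := by simp

theorem ThetaEqn.exp_eq {θ : ℝ} (h : ThetaEqn G θ) :
    exp (2 * θ * log (Fintype.card G)) = centralizerExpSum G (θ * log (Fintype.card G)) := by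
  rw [h, exp_log (Finset.sum_pos (fun _ _ => exp_pos _) Finset.univ_nonempty)]
  rfl

end

theorem centralizerExpSum_prod {A P : Type*} [CommGroup A] [Group P] [Fintype A] [Fintype P]
    (t : ℝ) : centralizerExpSum (A × P) t = Fintype.card A * centralizerExpSum P t := by
  have hA : (0 : ℝ) < Fintype.card A := by positivity
  simp only [centralizerExpSum, Fintype.sum_prod_type, card_centralizer_singleton_prod,
    Fintype.card_prod, Nat.card_eq_fintype_card, Nat.cast_mul, mul_div_mul_left _ _ hA.ne',
    Finset.sum_const, Finset.card_univ, nsmul_eq_mul]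

theorem Real.le_log_two_add_or_of_exp_le_add {u v w : ℝ} (h : exp u ≤ exp v + exp w) :
    u ≤ log 2 + v ∨ u ≤ log 2 + w := by
  simp only [← exp_le_exp (x := u), exp_add, exp_log two_pos]
  rcases le_total v w with hvw | hwv
  · exact Or.inr (by linarith [exp_le_exp.2 hvw])
  · exact Or.inl (by linarith [exp_le_exp.2 hwv])

section

variable {A P : Type*} [CommGroup A] [Group P] [Fintype A] [Fintype P] {θ : ℝ}

theorem ThetaEqn.log_card_div_le_of_prod (h : ThetaEqn (A × P) θ)
    (hL : 0 < log (Fintype.card (A × P))) :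
    log (Fintype.card A) / log (Fintype.card (A × P)) ≤ θ := by
  set L := log (Fintype.card (A × P))
  have hA : (0 : ℝ) < Fintype.card A := by positivity
  have key : Fintype.card A * exp (θ * L) ≤ exp (2 * θ * L) := by
    rw [h.exp_eq, centralizerExpSum_prod]
    exact mul_le_mul_of_nonneg_left (exp_le_centralizerExpSum P _) hA.le
  have := log_le_log (by positivity) key
  rw [log_mul hA.ne' (exp_ne_zero _), log_exp, log_exp] at this
  rw [div_le_iff₀ hL]
  linarith

theorem ThetaEqn.le_max_of_prod (h : ThetaEqn (A × P) θ) (hθ : 0 ≤ θ)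
    (hL : 0 < log (Fintype.card (A × P))) {δ : ℝ} (hδ : δ < 2)
    (hP : ∀ x : P, x ≠ 1 → (Nat.card (centralizer {x}) : ℝ) ≤ δ * Fintype.card P) :
    θ ≤ max (log 2 / log (Fintype.card (A × P)) +
        log (Fintype.card A) / log (Fintype.card (A × P)))
      ((1 + log 2 / log (Fintype.card (A × P))) / (2 - δ)) := by
  set L := log (Fintype.card (A × P))
  have hA : (0 : ℝ) < Fintype.card A := by positivity
  have key : exp (2 * θ * L) ≤ exp (log (Fintype.card A) + θ * L) + exp (L + θ * L * δ) := by
    rw [h.exp_eq, centralizerExpSum_prod, exp_add, exp_add, exp_log hA, exp_log (by positivity)]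
    calc _ ≤ Fintype.card A * (exp (θ * L) + Fintype.card P * exp (θ * L * δ)) :=
          mul_le_mul_of_nonneg_left (centralizerExpSum_le (by positivity) hP) hA.le
      _ = _ := by push_cast [Fintype.card_prod]; ring
  rcases Real.le_log_two_add_or_of_exp_le_add key with h1 | h2
  · refine le_max_of_le_left ?_
    rw [← add_div, le_div_iff₀ hL]
    linarith
  · refine le_max_of_le_right ?_
    rw [le_div_iff₀ (by linarith), ← mul_le_mul_iff_left₀ hL, add_mul,
      div_mul_cancel₀ _ hL.ne']
    linarith

end

theorem ThetaEqn.bounds_of_cyclic_prod_perm {k m : ℕ} [NeZero k] {θ : ℝ}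
    (h : ThetaEqn (Multiplicative (ZMod k) × Equiv.Perm (Fin m)) θ) (hθ : 0 ≤ θ)
    (hm : 2 ≤ m) (hL : 0 < log (k * m.factorial)) :
    log k / log (k * m.factorial) ≤ θ ∧
      θ ≤ max (log 2 / log (k * m.factorial) + log k / log (k * m.factorial))
        ((1 + log 2 / log (k * m.factorial)) / (2 - 1 / ((m : ℝ) - 1))) := by
  have hcard : (Fintype.card (Multiplicative (ZMod k) × Equiv.Perm (Fin m)) : ℝ) =
      k * m.factorial := by
    simp [Fintype.card_perm]
  have hP : ∀ σ : Equiv.Perm (Fin m), σ ≠ 1 →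
      (Nat.card (centralizer {σ}) : ℝ) ≤
        1 / ((m : ℝ) - 1) * Fintype.card (Equiv.Perm (Fin m)) :=
    fun σ hσ => by simpa using Equiv.Perm.card_centralizer_le hσ
  have hδ : 1 / ((m : ℝ) - 1) < 2 := by
    have : (2 : ℝ) ≤ m := by exact_mod_cast hm
    exact ((div_le_one (by linarith)).2 (by linarith)).trans_lt one_lt_two
  have hlo := h.log_card_div_le_of_prod (by rwa [hcard])
  have hhi := h.le_max_of_prod hθ (by rwa [hcard]) hδ hP
  simp only [hcard, Fintype.card_multiplicative, ZMod.card] at hlo hhi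
  exact ⟨hlo, hhi⟩

theorem Real.log_sub_log_two_le_log_floor {x : ℝ} (hx : 1 ≤ x) :
    log x - log 2 ≤ log ⌊x⌋₊ := by
  rw [← log_div (by positivity) two_ne_zero]
  exact log_le_log (by positivity) (Nat.div_two_lt_floor hx).le

section

variable {ι : Type*} {l : Filter ι}

theorem tendsto_max_log_two_div {a L δ : ι → ℝ} {x : ℝ} (hx : 1 / 2 ≤ x)
    (ha : Tendsto (fun i => a i / L i) l (𝓝 x)) (hL : Tendsto L l atTop)
    (hδ : Tendsto δ l (𝓝 0)) :
    Tendsto (fun i => max (log 2 / L i + a i / L i) ((1 + log 2 / L i) / (2 - δ i))) l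
      (𝓝 x) := by
  have h2 : Tendsto (fun i => log 2 / L i) l (𝓝 0) := tendsto_const_nhds.div_atTop hL
  have h1 : Tendsto (fun i => log 2 / L i + a i / L i) l (𝓝 x) := by simpa using h2.add ha
  have h3 : Tendsto (fun i => (1 + log 2 / L i) / (2 - δ i)) l (𝓝 (1 / 2)) := by
    simpa [Pi.div_def] using ((tendsto_const_nhds (x := (1 : ℝ))).add h2).div
      (tendsto_const_nhds.sub hδ) (by norm_num)
  rw [← max_eq_left hx]
  exact h1.max h3

variable {N : ι → ℝ} {c : ℝ}

theorem tendsto_log_floor_rpow_div_log (hN : Tendsto N l atTop) (hc : 0 < c) :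
    Tendsto (fun i => log ⌊N i ^ c⌋₊ / log (N i)) l (𝓝 c) := by
  have hB : Tendsto (fun i => log (N i)) l atTop := tendsto_log_atTop.comp hN
  have hlower : Tendsto (fun i => c - log 2 / log (N i)) l (𝓝 c) := by
    simpa using tendsto_const_nhds.sub (tendsto_const_nhds.div_atTop hB)
  refine tendsto_of_tendsto_of_tendsto_of_le_of_le' hlower tendsto_const_nhds ?_ ?_
  · filter_upwards [hN.eventually_ge_atTop 1, hB.eventually_gt_atTop 0] with i hN1 hB0
    rw [sub_div' hB0.ne', div_le_div_iff_of_pos_right hB0, ← log_rpow (by positivity)]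
    exact log_sub_log_two_le_log_floor (one_le_rpow hN1 hc.le)
  · filter_upwards [hN.eventually_ge_atTop 1, hB.eventually_gt_atTop 0] with i hN1 hB0
    rw [div_le_iff₀ hB0, ← log_rpow (by positivity)]
    exact log_le_log (by exact_mod_cast Nat.floor_pos.2 (one_le_rpow hN1 hc.le))
      (Nat.floor_le (by positivity))

theorem log_floor_rpow_mul_eventuallyEq (hN : Tendsto N l atTop) (hc : 0 ≤ c) :
    (fun i => log (⌊N i ^ c⌋₊ * N i)) =ᶠ[l] fun i => log ⌊N i ^ c⌋₊ + log (N i) := by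
  filter_upwards [hN.eventually_ge_atTop 1] with i hN1
  have : (0 : ℝ) < ⌊N i ^ c⌋₊ := by exact_mod_cast Nat.floor_pos.2 (one_le_rpow hN1 hc)
  exact log_mul this.ne' (by positivity)

theorem tendsto_log_floor_rpow_mul (hN : Tendsto N l atTop) (hc : 0 ≤ c) :
    Tendsto (fun i => log (⌊N i ^ c⌋₊ * N i)) l atTop := by
  refine tendsto_atTop_mono' l ?_ (tendsto_log_atTop.comp hN)
  filter_upwards [log_floor_rpow_mul_eventuallyEq hN hc] with i hi
  rw [hi]
  exact le_add_of_nonneg_left (log_natCast_nonneg _)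

theorem tendsto_log_floor_rpow_div_log_mul (hN : Tendsto N l atTop) (hc : 0 < c) :
    Tendsto (fun i => log ⌊N i ^ c⌋₊ / log (⌊N i ^ c⌋₊ * N i)) l
      (𝓝 (c / (c + 1))) := by
  have hB : Tendsto (fun i => log (N i)) l atTop := tendsto_log_atTop.comp hN
  have h := tendsto_log_floor_rpow_div_log hN hc
  refine (h.div (h.add_const 1) (by positivity)).congr' ?_
  filter_upwards [log_floor_rpow_mul_eventuallyEq hN hc.le, hB.eventually_gt_atTop 0]
    with i hi hB0
  rw [Pi.div_apply, hi, div_add_one hB0.ne', div_div_div_cancel_right₀ hB0.ne']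

end

/-- Let `1/2 ≤ α < 1`.  For `m ≥ 2` set `n_m = m!`, `k_m = ⌊n_m^{α/(1−α)}⌋` and
`G_m = C_{k_m} × S_m`.  Then `Θ(G_m) → α` as `m → ∞`: for every `ε > 0` there is `M`
such that `|Θ(G_m) − α| ≤ ε` for all `m ≥ M`. -/
theorem theta_cyclic_times_symmetric (α : ℝ) (hα : 1/2 ≤ α) (hα1 : α < 1)
    (ε : ℝ) (hε : 0 < ε) :
    ∃ M : ℕ, ∀ m : ℕ, M ≤ m → 2 ≤ m →
      ∀ [NeZero (⌊((m.factorial : ℝ)) ^ (α / (1 - α))⌋₊)],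
      ∀ θ : ℝ, θ ∈ Set.Icc (1/2 : ℝ) 1 →
        ThetaEqn (Multiplicative (ZMod (⌊((m.factorial : ℝ)) ^ (α / (1 - α))⌋₊)) × Equiv.Perm (Fin m)) θ →
        |θ - α| ≤ ε := by
  have h1α : 0 < 1 - α := by linarith
  have hc : 0 < α / (1 - α) := div_pos (by linarith) h1α
  have hcα : α / (1 - α) / (α / (1 - α) + 1) = α := by
    field_simp
    ring
  have hN : Tendsto (fun m : ℕ => (m.factorial : ℝ)) atTop atTop :=
    tendsto_natCast_atTop_atTop.comp factorial_tendsto_atTop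
  have hlo := tendsto_log_floor_rpow_div_log_mul hN hc
  have hL := tendsto_log_floor_rpow_mul hN hc.le
  rw [hcα] at hlo
  have hδ : Tendsto (fun m : ℕ => 1 / ((m : ℝ) - 1)) atTop (𝓝 0) :=
    tendsto_const_nhds.div_atTop (tendsto_atTop_add_const_right _ (-1) tendsto_natCast_atTop_atTop)
  have hhi := tendsto_max_log_two_div hα hlo hL hδ
  obtain ⟨M, hM⟩ := eventually_atTop.1
    ((hlo.eventually (lt_mem_nhds (by linarith : α - ε < α))).and
      ((hhi.eventually (gt_mem_nhds (by linarith : α < α + ε))).and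
        (hL.eventually_gt_atTop 0)))
  refine ⟨M, fun m hmM hm _ θ hθ hEq => ?_⟩
  obtain ⟨hlo_m, hhi_m, hL_m⟩ := hM m hmM
  obtain ⟨hlo_θ, hhi_θ⟩ := hEq.bounds_of_cyclic_prod_perm (by linarith [hθ.1]) hm hL_m
  rw [abs_le]
  constructor <;> linarith
end

section
/- For every ε > 0 there exists N such that every finite simple non-abelian group G with |G| ≥ N satisfies Θ(G) ≤ 1/2 + ε. That is, Θ(G) = 1/2 + o(1) as |G| → ∞ over finite simple non-abelian groups. -/
open Subgroup Real
open scoped Nat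

theorem Subgroup.index_normalCore_dvd_factorial_index {G : Type*} [Group G] (H : Subgroup G)
    [H.FiniteIndex] :
    H.normalCore.index ∣ H.index ! := by
  rw [normalCore_eq_ker, index_ker, index_eq_card, ← Nat.card_perm]
  exact card_subgroup_dvd_card _

namespace IsSimpleGroup

variable {G : Type*} [Group G] [IsSimpleGroup G]

theorem card_dvd_factorial_index [Finite G] {H : Subgroup G} (hH : H ≠ ⊤) :
    Nat.card G ∣ H.index ! := by
  have hcore : H.normalCore = ⊥ :=
    (normalCore_normal H).eq_bot_or_eq_top.resolve_right
      fun h ↦ hH (top_le_iff.mp (h ▸ H.normalCore_le))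
  simpa [hcore] using H.index_normalCore_dvd_factorial_index

theorem center_eq_bot (hG : ¬ ∀ a b : G, a * b = b * a) : center G = ⊥ :=
  (center G).normal_of_characteristic.eq_bot_or_eq_top.resolve_right
    fun h ↦ hG fun a b ↦ (mem_center_iff.mp (h ▸ mem_top a) b).symm

theorem centralizer_ne_top (hG : ¬ ∀ a b : G, a * b = b * a) {x : G} (hx : x ≠ 1) :
    centralizer {x} ≠ ⊤ := by
  rw [Ne, centralizer_eq_top_iff_subset, Set.singleton_subset_iff, SetLike.mem_coe,
    center_eq_bot hG, mem_bot]
  exact hx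

theorem mul_card_centralizer_le [Finite G] (hG : ¬ ∀ a b : G, a * b = b * a) {m : ℕ}
    (hm : m ! < Nat.card G) {x : G} (hx : x ≠ 1) :
    m * Nat.card (centralizer {x}) ≤ Nat.card G := by
  have hindex : m ≤ (centralizer {x}).index := by
    by_contra! h
    have := (card_dvd_factorial_index (centralizer_ne_top hG hx)).trans
      (Nat.factorial_dvd_factorial h.le)
    exact (Nat.le_of_dvd (Nat.factorial_pos m) this).not_gt hm
  rw [← card_mul_index (centralizer {x}), mul_comm]
  exact Nat.mul_le_mul_left _ hindex

end IsSimpleGroup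

theorem Real.log_sum_exp_le {ι : Type*} [Fintype ι] (a : ι) (f : ι → ℝ) {s : ℝ}
    (ha : f a ≤ log (Fintype.card ι) + s) (hf : ∀ i ≠ a, f i ≤ s) :
    log (∑ i, exp (f i)) ≤ log 2 + log (Fintype.card ι) + s := by
  classical
  have hcard : (0 : ℝ) < Fintype.card ι := by exact_mod_cast Fintype.card_pos_iff.mpr ⟨a⟩
  have hrest : ∑ i ∈ Finset.univ.erase a, exp (f i) ≤ Fintype.card ι * exp s := by
    calc ∑ i ∈ Finset.univ.erase a, exp (f i)
        ≤ (Finset.univ.erase a).card • exp s :=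
          Finset.sum_le_card_nsmul _ _ _ fun i hi ↦
            exp_le_exp.mpr (hf i (Finset.ne_of_mem_erase hi))
      _ ≤ Fintype.card ι * exp s := by
          rw [nsmul_eq_mul]
          gcongr
          exact_mod_cast Finset.card_erase_le
  have hsum : ∑ i, exp (f i) ≤ exp (log 2 + log (Fintype.card ι) + s) := by
    rw [← Finset.add_sum_erase _ _ (Finset.mem_univ a), exp_add, exp_add, exp_log two_pos,
      exp_log hcard]
    have := exp_le_exp.mpr ha
    rw [exp_add, exp_log hcard] at this
    linarith
  exact (log_le_log (Finset.sum_pos (fun i _ ↦ exp_pos _) ⟨a, Finset.mem_univ a⟩) hsum).trans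
    (log_exp _).le

theorem ThetaEqn.two_mul_mul_log_le {G : Type*} [Group G] [Fintype G] {θ δ : ℝ}
    (hθ : θ ≤ 1) (hδ : 0 ≤ δ)
    (hC : ∀ x : G, x ≠ 1 → (Nat.card (centralizer {x}) : ℝ) / Fintype.card G ≤ δ)
    (h : ThetaEqn G θ) :
    2 * θ * log (Fintype.card G) ≤ log 2 + (1 + δ) * log (Fintype.card G) := by
  set L := log (Fintype.card G)
  set r : G → ℝ := fun x ↦ Nat.card (centralizer {x}) / Fintype.card G
  have hL : 0 ≤ L := log_natCast_nonneg _
  have hr_nonneg (x : G) : 0 ≤ r x := by positivity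
  have hr_le_one (x : G) : r x ≤ 1 := by
    simp only [r, ← Nat.card_eq_fintype_card]
    exact div_le_one_of_le₀ (by exact_mod_cast card_le_card_group _) (by positivity)
  have hterm (x : G) : θ * L * r x ≤ r x * L := by
    rw [mul_right_comm, mul_comm θ]
    gcongr
    exact mul_le_of_le_one_right (hr_nonneg x) hθ
  have key : log (∑ x, exp (θ * L * r x)) ≤ log 2 + L + δ * L := by
    refine log_sum_exp_le 1 _ ?_ fun x hx ↦ ?_
    · nlinarith [hterm 1, hr_le_one 1]
    · exact (hterm x).trans (by gcongr; exact hC x hx)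
  unfold ThetaEqn at h
  rw [← h] at key
  linarith

/-- `Θ(G) = 1/2 + o(1)` over finite simple non-abelian groups: for every `ε > 0` there is
`N` such that every finite simple non-abelian group `G` with `|G| ≥ N` satisfies
`Θ(G) ≤ 1/2 + ε`. -/
theorem theta_simple_group (ε : ℝ) (hε : 0 < ε) :
    ∃ N : ℕ, ∀ (G : Type) [Group G] [Fintype G], IsSimpleGroup G →
      (¬ ∀ a b : G, a * b = b * a) → N ≤ Fintype.card G →
      ∀ θ : ℝ, θ ∈ Set.Icc (1/2 : ℝ) 1 → ThetaEqn G θ →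
        θ ≤ 1/2 + ε := by
  obtain ⟨m, hm⟩ : ∃ m : ℕ, 1 ≤ ε * m :=
    ⟨⌈1 / ε⌉₊, by rw [← div_le_iff₀' hε]; exact Nat.le_ceil _⟩
  refine ⟨max (m ! + 1) (2 ^ m), fun G _ _ hsimple hG hN θ hθ hΘ ↦ ?_⟩
  have hfac : m ! < Nat.card G := by rw [Nat.card_eq_fintype_card]; omega
  have hpow : ((2 ^ m : ℕ) : ℝ) ≤ Fintype.card G := by
    exact_mod_cast (le_max_right _ _).trans hN
  set L := log (Fintype.card G)
  have hlog2 : log 2 ≤ ε * L := by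
    have : m * log 2 ≤ L := by
      rw [← log_pow, ← Nat.cast_ofNat, ← Nat.cast_pow]
      exact log_le_log (by positivity) hpow
    nlinarith [log_pos one_lt_two]
  have hC (x : G) (hx : x ≠ 1) : (Nat.card (centralizer {x}) : ℝ) / Fintype.card G ≤ ε := by
    have hcard : (m * Nat.card (centralizer {x}) : ℝ) ≤ Fintype.card G := by
      rw [← Nat.card_eq_fintype_card]
      exact_mod_cast IsSimpleGroup.mul_card_centralizer_le hG hfac hx
    rw [div_le_iff₀ (by positivity)]
    nlinarith
  have hL : 0 < L := by nlinarith [log_pos one_lt_two]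
  have hΘ_le := hΘ.two_mul_mul_log_le hθ.2 hε.le hC
  nlinarith
end
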